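/- Let a₁, ..., a_{2n-1} be distinct nonzero points of 𝔻 with a₁ + \bar{a₁}a_{2j}a_{2j+1} = a_{2j} + a_{2j+1} for j = 1, ..., n-1, and B(z) = z ∏_{k=1}^{2n-1}(z-a_k)/(1-\bar{a_k}z). If L is any line through the point a₁ intersecting the unit circle ∂𝔻 at the two points z₁ and z₂, then B(z₁) = B(z₂). -/

import Mathlib

/-!
Write `b_p(z) = (z - p) / (1 - p̄ z)`, so that `B = (b₀ b_{a₁}) ∏ⱼ b_{a_{2j}} b_{a_{2j+1}}`.
If `c` lies on the chord `z₁z₂` of the unit circle, conjugating the equation of the line and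
using `z̄ᵢ = 1 / zᵢ` gives `z₁ + z₂ = c + c̄ z₁ z₂`. The hypothesis on the pair `(p, q)` says that
`p + q = c + c̄ p q` as well, and these two relations force `b_p b_q` to take the same value at `z₁`
and `z₂`. The pair `(0, a₁)` satisfies the relation trivially, and the pairs `(a_{2j}, a_{2j+1})`
satisfy it by hypothesis.
-/

open Complex ComplexConjugate

noncomputable section

def blaschkeFactor (p z : ℂ) : ℂ := (z - p) / (1 - conj p * z)

@[simp]
lemma blaschkeFactor_zero_left (z : ℂ) : blaschkeFactor 0 z = z := by
  simp [blaschkeFactor]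

lemma one_sub_conj_mul_ne_zero {p z : ℂ} (hp : ‖p‖ < 1) (hz : ‖z‖ = 1) :
    1 - conj p * z ≠ 0 := by
  intro h
  have : ‖conj p * z‖ = 1 := by rw [← sub_eq_zero.mp h, norm_one]
  rw [norm_mul, RCLike.norm_conj, hz, mul_one] at this
  exact hp.ne this

lemma add_eq_add_conj_mul_of_mem_chord {z₁ z₂ c : ℂ} (hz₁ : ‖z₁‖ = 1) (hz₂ : ‖z₂‖ = 1)
    {t : ℝ} (hc : c = z₁ + t * (z₂ - z₁)) :
    z₁ + z₂ = c + conj c * (z₁ * z₂) := by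
  have u₁ : z₁ * conj z₁ = 1 := by rw [mul_conj', hz₁]; norm_num
  have u₂ : z₂ * conj z₂ = 1 := by rw [mul_conj', hz₂]; norm_num
  have hc' : conj c = conj z₁ + t * (conj z₂ - conj z₁) := by simpa using congrArg conj hc
  linear_combination -hc - (z₁ * z₂) * hc' - (1 - (t : ℂ)) * z₂ * u₁ - (t : ℂ) * z₁ * u₂

lemma blaschkeFactor_mul_eq_of_mem_chord {p q c z₁ z₂ : ℂ} (hp : ‖p‖ < 1) (hq : ‖q‖ < 1)
    (hz₁ : ‖z₁‖ = 1) (hz₂ : ‖z₂‖ = 1) (hpq : c + conj c * p * q = p + q)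
    (hchord : z₁ + z₂ = c + conj c * (z₁ * z₂)) :
    blaschkeFactor p z₁ * blaschkeFactor q z₁ = blaschkeFactor p z₂ * blaschkeFactor q z₂ := by
  have hpq' : conj c + c * conj p * conj q = conj p + conj q := by
    simpa [mul_comm, mul_left_comm] using congrArg conj hpq
  unfold blaschkeFactor
  rw [div_mul_div_comm, div_mul_div_comm, div_eq_div_iff
    (mul_ne_zero (one_sub_conj_mul_ne_zero hp hz₁) (one_sub_conj_mul_ne_zero hq hz₁))
    (mul_ne_zero (one_sub_conj_mul_ne_zero hp hz₂) (one_sub_conj_mul_ne_zero hq hz₂))]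
  linear_combination (z₂ - z₁) * (-(1 - conj p * conj q * z₁ * z₂) * hpq
    - (z₁ * z₂ - p * q) * hpq' + (p * q * conj p * conj q - 1) * hchord)

lemma prod_Icc_one_two_mul_add_one {M : Type*} [CommMonoid M] (f : ℕ → M) (m : ℕ) :
    ∏ k ∈ Finset.Icc 1 (2 * m + 1), f k = f 1 * ∏ j ∈ Finset.Icc 1 m, f (2 * j) * f (2 * j + 1) := by
  induction m with
  | zero => simp
  | succ m ih =>
    rw [show 2 * (m + 1) + 1 = 2 * m + 1 + 1 + 1 by ring,
      Finset.prod_Icc_succ_top (by omega), Finset.prod_Icc_succ_top (by omega), ih,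
      Finset.prod_Icc_succ_top (by omega), show 2 * m + 1 + 1 = 2 * (m + 1) by ring]
    simp only [mul_assoc]

end

theorem line_through_a1_equal_values_general (n : ℕ) (hn : 2 ≤ n) (a : ℕ → ℂ)
    (ha : ∀ k ∈ Finset.Icc 1 (2 * n - 1), ‖a k‖ < 1)
    (hcond : ∀ j ∈ Finset.Icc 1 (n - 1),
      a 1 + (starRingEnd ℂ) (a 1) * a (2 * j) * a (2 * j + 1) =
        a (2 * j) + a (2 * j + 1))
    (B : ℂ → ℂ)
    (hB : ∀ z, B z = z * ∏ k ∈ Finset.Icc 1 (2 * n - 1),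
      (z - a k) / (1 - (starRingEnd ℂ) (a k) * z))
    (z₁ z₂ : ℂ) (hz₁ : ‖z₁‖ = 1) (hz₂ : ‖z₂‖ = 1)
    (hline : ∃ t : ℝ, a 1 = z₁ + (t : ℂ) * (z₂ - z₁)) :
    B z₁ = B z₂ := by
  obtain ⟨m, rfl⟩ : ∃ m, n = m + 1 := ⟨n - 1, by omega⟩
  obtain ⟨t, ht⟩ := hline
  have hchord := add_eq_add_conj_mul_of_mem_chord hz₁ hz₂ ht
  have hmem : ∀ k, 1 ≤ k → k ≤ 2 * m + 1 → ‖a k‖ < 1 := fun k h₁ h₂ =>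
    ha k (Finset.mem_Icc.mpr ⟨h₁, by omega⟩)
  have hB' : ∀ z, B z = blaschkeFactor 0 z * blaschkeFactor (a 1) z *
      ∏ j ∈ Finset.Icc 1 m, blaschkeFactor (a (2 * j)) z * blaschkeFactor (a (2 * j + 1)) z := by
    intro z
    rw [hB, show 2 * (m + 1) - 1 = 2 * m + 1 by omega, prod_Icc_one_two_mul_add_one,
      blaschkeFactor_zero_left, mul_assoc]
    rfl
  rw [hB', hB']
  refine congrArg₂ (· * ·) ?_ (Finset.prod_congr rfl fun j hj => ?_)
  · exact blaschkeFactor_mul_eq_of_mem_chord (by simp) (hmem 1 le_rfl (by omega)) hz₁ hz₂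
      (by ring) hchord
  · obtain ⟨hj₁, hj₂⟩ := Finset.mem_Icc.mp hj
    exact blaschkeFactor_mul_eq_of_mem_chord (hmem _ (by omega) (by omega))
      (hmem _ (by omega) (by omega)) hz₁ hz₂ (hcond j (by simpa using hj)) hchord

/-- Under the zero conditions, any line through `a₁` meets the unit circle at
two points `z₁, z₂` with `B z₁ = B z₂`. -/
theorem line_through_a1_equal_values (n : ℕ) (hn : 2 ≤ n) (a : ℕ → ℂ)
    (ha : ∀ k ∈ Finset.Icc 1 (2 * n - 1), ‖a k‖ < 1)
    (ha0 : ∀ k ∈ Finset.Icc 1 (2 * n - 1), a k ≠ 0)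
    (hainj : Set.InjOn a (Finset.Icc 1 (2 * n - 1)))
    (hcond : ∀ j ∈ Finset.Icc 1 (n - 1),
      a 1 + (starRingEnd ℂ) (a 1) * a (2 * j) * a (2 * j + 1) =
        a (2 * j) + a (2 * j + 1))
    (B : ℂ → ℂ)
    (hB : ∀ z, B z = z * ∏ k ∈ Finset.Icc 1 (2 * n - 1),
      (z - a k) / (1 - (starRingEnd ℂ) (a k) * z))
    (z₁ z₂ : ℂ) (hz₁ : ‖z₁‖ = 1) (hz₂ : ‖z₂‖ = 1)
    (hz12 : z₁ ≠ z₂) (hline : ∃ t : ℝ, a 1 = z₁ + (t : ℂ) * (z₂ - z₁)) :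
    B z₁ = B z₂ :=
  line_through_a1_equal_values_general n hn a ha hcond B hB z₁ z₂ hz₁ hz₂ hline
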